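/- With the notation of the context: if λ₁·λ₂ ≤ 2, then Φ(1) ∈ (0, π]; and if λ₁·λ₂ > 2, then Φ(1) ∈ (π, 2π). (This is Lemma 2.11: for lifts A, B of the parabolic elements π_∞(λ₁) and π_α(λ₂) to the m-fold covering group of PSL(2,ℝ), lev_m(A·B) − lev_m(A) − lev_m(B) equals 0 if λ₁λ₂ ≤ 2 and equals 1 otherwise.) -/

import Mathlib

/-- The parabolic element `π_∞(t·λ₁)` of `SL(2,ℝ)` as a matrix. -/
noncomputable def matA (l1 t : ℝ) : Matrix (Fin 2) (Fin 2) ℝ :=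
  !![1, t * l1; 0, 1]

/-- The parabolic element `π_α(t·λ₂)` of `SL(2,ℝ)` with fixed point `α`. -/
noncomputable def matB (l2 α t : ℝ) : Matrix (Fin 2) (Fin 2) ℝ :=
  !![1 - t * l2 * α, t * l2 * α ^ 2; -(t * l2), 1 + t * l2 * α]

/-- The product path `M(t) = A(t)·B(t)`. -/
noncomputable def matM (l1 l2 α t : ℝ) : Matrix (Fin 2) (Fin 2) ℝ :=
  matA l1 t * matB l2 α t

/-- `w(t) = (a(t)+d(t)) + i(b(t)−c(t))`. -/
noncomputable def wfun (l1 l2 α t : ℝ) : ℂ :=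
  ((matM l1 l2 α t 0 0 + matM l1 l2 α t 1 1 : ℝ) : ℂ) +
    Complex.I * ((matM l1 l2 α t 0 1 - matM l1 l2 α t 1 0 : ℝ) : ℂ)

/-!
Proof idea: for `t > 0` the point `w(t)` lies in the open upper half-plane and `w(0) = 2`, so
`w` never meets the branch cut of `arg`, and `2 · arg w(t)` is itself a continuous lift of
`(w/‖w‖)²` vanishing at `0`. Two continuous lifts of the same circle-valued path differ by a
continuous function with values in `2πℤ`, hence agree: `Φ(1) = 2 · arg w(1)`. Finally
`Re w(1) = 2 - λ₁λ₂` decides whether `arg w(1)` lies in `(0, π/2]` or in `(π/2, π)`.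
-/

open Complex Set
open scoped Real

lemma IsPreconnected.eqOn_of_circleExp_eq {X : Type*} [TopologicalSpace X] {s : Set X}
    (hs : IsPreconnected s) {f g : X → ℝ} (hf : ContinuousOn f s) (hg : ContinuousOn g s)
    (hfg : ∀ x ∈ s, Circle.exp (f x) = Circle.exp (g x)) {x₀ : X} (hx₀ : x₀ ∈ s)
    (h₀ : f x₀ = g x₀) : EqOn f g s := by
  intro x hx
  have hmaps : MapsTo (f - g) s (AddSubgroup.zmultiples (2 * π)) := by
    intro y hy
    obtain ⟨m, hm⟩ := Circle.exp_eq_exp.mp (hfg y hy)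
    exact AddSubgroup.mem_zmultiples_iff.mpr ⟨m, by simp [hm, zsmul_eq_mul]⟩
  have hconst := hs.constant_of_mapsTo (isDiscrete_iff_discreteTopology.mpr
    (inferInstanceAs (DiscreteTopology (AddSubgroup.zmultiples (2 * π)))))
    (hf.sub hg) hmaps hx hx₀
  simpa [h₀, sub_eq_zero] using hconst

lemma Complex.div_norm_sq_eq_exp_two_arg {z : ℂ} (hz : z ≠ 0) :
    (z / ‖z‖) ^ 2 = exp (↑(2 * arg z) * I) := by
  have hnorm : (‖z‖ : ℂ) ≠ 0 := ofReal_ne_zero.mpr (norm_ne_zero_iff.mpr hz)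
  have hunit : z / ‖z‖ = exp (arg z * I) := by
    rw [div_eq_iff hnorm, mul_comm]
    exact (norm_mul_exp_arg_mul_I z).symm
  rw [hunit, ← exp_nat_mul]
  push_cast
  ring_nf

lemma Complex.arg_mem_Ioo_of_im_pos {z : ℂ} (hz : 0 < z.im) : arg z ∈ Ioo 0 π := by
  refine ⟨lt_of_le_of_ne (arg_nonneg_iff.mpr hz.le) fun h => ?_,
    arg_lt_pi_iff.mpr (Or.inr hz.ne')⟩
  exact hz.ne' (arg_eq_zero_iff.mp h.symm).2

section wfun

variable (l1 l2 α t : ℝ)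

@[simp]
lemma wfun_re : (wfun l1 l2 α t).re = 2 - l1 * l2 * t ^ 2 := by
  simp [wfun, matM, matA, matB, Matrix.mul_apply, Fin.sum_univ_two, -ofReal_pow]
  ring

@[simp]
lemma wfun_im : (wfun l1 l2 α t).im = t * (l1 + l2 + l2 * α ^ 2) + l1 * l2 * α * t ^ 2 := by
  simp [wfun, matM, matA, matB, Matrix.mul_apply, Fin.sum_univ_two, -ofReal_pow]
  ring

lemma continuous_wfun : Continuous (wfun l1 l2 α) := by
  have h : wfun l1 l2 α = fun t => ((2 - l1 * l2 * t ^ 2 : ℝ) : ℂ)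
      + ((t * (l1 + l2 + l2 * α ^ 2) + l1 * l2 * α * t ^ 2 : ℝ) : ℂ) * I := by
    funext t
    apply Complex.ext <;> simp [-ofReal_pow]
  rw [h]
  fun_prop

lemma arg_wfun_zero : arg (wfun l1 l2 α 0) = 0 :=
  arg_eq_zero_iff.mpr ⟨by norm_num, by simp⟩

variable {l1 l2 α t}

lemma wfun_im_pos (hl1 : 0 < l1) (hl2 : 0 < l2) (hα : 0 < α) (ht : 0 < t) :
    0 < (wfun l1 l2 α t).im := by
  rw [wfun_im]
  positivity

lemma wfun_mem_slitPlane (hl1 : 0 < l1) (hl2 : 0 < l2) (hα : 0 < α) (ht : 0 ≤ t) :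
    wfun l1 l2 α t ∈ slitPlane := by
  rcases ht.eq_or_lt with rfl | ht
  · exact Or.inl (by norm_num)
  · exact Or.inr (wfun_im_pos hl1 hl2 hα ht).ne'

lemma continuousOn_arg_wfun (hl1 : 0 < l1) (hl2 : 0 < l2) (hα : 0 < α) :
    ContinuousOn (fun t => arg (wfun l1 l2 α t)) (Ici 0) := fun _ ht =>
  ((continuousAt_arg (wfun_mem_slitPlane hl1 hl2 hα ht)).comp
    (continuous_wfun l1 l2 α).continuousAt).continuousWithinAt

end wfun

/-- Lemma 2.11: for lifts of the parabolic elements `π_∞(λ₁)` and `π_α(λ₂)`,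
if `λ₁λ₂ ≤ 2` then `Φ(1) ∈ (0, π]`, and if `λ₁λ₂ > 2` then `Φ(1) ∈ (π, 2π)`. -/
theorem lemma211 (l1 l2 α : ℝ) (hl1 : 0 < l1) (hl2 : 0 < l2) (hα : 0 < α)
    (Φ : ℝ → ℝ) (hΦc : ContinuousOn Φ (Set.Icc 0 1)) (hΦ0 : Φ 0 = 0)
    (hΦ : ∀ t ∈ Set.Icc (0 : ℝ) 1,
      Complex.exp (Complex.I * (Φ t : ℂ))
        = (wfun l1 l2 α t / (‖wfun l1 l2 α t‖ : ℂ)) ^ 2) :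
    (l1 * l2 ≤ 2 → Φ 1 ∈ Set.Ioc 0 Real.pi) ∧
    (2 < l1 * l2 → Φ 1 ∈ Set.Ioo Real.pi (2 * Real.pi)) := by
  have hlift : Φ 1 = 2 * arg (wfun l1 l2 α 1) := by
    refine isPreconnected_Icc.eqOn_of_circleExp_eq (g := fun t => 2 * arg (wfun l1 l2 α t)) hΦc
      ((continuousOn_const.mul (continuousOn_arg_wfun hl1 hl2 hα)).mono Icc_subset_Ici_self)
      (fun t ht => ?_) (left_mem_Icc.mpr zero_le_one) (by simp [hΦ0, arg_wfun_zero])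
      (right_mem_Icc.mpr zero_le_one)
    rw [Circle.ext_iff, Circle.coe_exp, Circle.coe_exp, mul_comm, hΦ t ht,
      div_norm_sq_eq_exp_two_arg (slitPlane_ne_zero (wfun_mem_slitPlane hl1 hl2 hα ht.1))]
  have him := wfun_im_pos hl1 hl2 hα one_pos
  have hIoo := arg_mem_Ioo_of_im_pos him
  refine ⟨fun hL => ?_, fun hL => ?_⟩
  · have hle : arg (wfun l1 l2 α 1) ≤ π / 2 :=
      arg_le_pi_div_two_iff.mpr (Or.inl (by rw [wfun_re]; linarith))
    constructor <;> linarith [hIoo.1]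
  · have hlt : π / 2 < arg (wfun l1 l2 α 1) := by
      refine lt_of_not_ge fun hle => ?_
      rcases arg_le_pi_div_two_iff.mp hle with hre | him_neg
      · rw [wfun_re] at hre; linarith
      · linarith
    constructor <;> linarith [hIoo.2]
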